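/- arXiv:1605.06137 — 5 statements merged into one kernel-verified Lean document; each statement's English description precedes it below -/
import Mathlib

section
/- For a 2×2 matrix F with positive entries f_{11}, f_{12}, f_{21}, f_{22} and uniform stochastic vectors p = q = (1/2, 1/2), the scaling mean equals sm_{p,q}(F) = (√(f_{11} f_{22}) + √(f_{12} f_{21}))/2. -/
open Finset

/-- The scaling mean of a nonnegative `α × β` matrix `F` with respect to the
stochastic vectors `p` and `q`. -/
noncomputable def scalingMean {α β : ℕ} (p : Fin α → ℝ) (q : Fin β → ℝ)
    (F : Fin α → Fin β → ℝ) : ℝ :=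
  sInf { v : ℝ | ∃ (x : Fin α → ℝ) (y : Fin β → ℝ),
    (∀ r, 0 < x r) ∧ (∀ s, 0 < y s) ∧
    v = (∏ r, x r ^ (-(p r))) * (∏ s, y s ^ (-(q s))) *
        (∑ r, ∑ s, x r * F r s * y s * p r * q s) }

lemma rpow_neg_half_eq {t : ℝ} (ht : 0 < t) :
    t ^ (-(1/2 : ℝ)) = (Real.sqrt t)⁻¹ := by
  rw [Real.rpow_neg ht.le, ← Real.sqrt_eq_rpow]

lemma expr_eq (x y : Fin 2 → ℝ) (hx : ∀ r, 0 < x r) (hy : ∀ s, 0 < y s)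
    (F : Fin 2 → Fin 2 → ℝ) :
    (∏ r, x r ^ (-((fun _ => (1/2:ℝ)) r))) * (∏ s, y s ^ (-((fun _ => (1/2:ℝ)) s))) *
        (∑ r, ∑ s, x r * F r s * y s * ((fun _ => (1/2:ℝ)) r) * ((fun _ => (1/2:ℝ)) s))
    = (Real.sqrt (x 0) * Real.sqrt (x 1) * (Real.sqrt (y 0) * Real.sqrt (y 1)))⁻¹ *
      (x 0 * F 0 0 * y 0 + x 0 * F 0 1 * y 1 + x 1 * F 1 0 * y 0 + x 1 * F 1 1 * y 1) / 4 := by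
  have h0 := Real.sqrt_pos.mpr (hx 0)
  have h1 := Real.sqrt_pos.mpr (hx 1)
  have h2 := Real.sqrt_pos.mpr (hy 0)
  have h3 := Real.sqrt_pos.mpr (hy 1)
  simp only [Fin.prod_univ_two, Fin.sum_univ_two]
  rw [rpow_neg_half_eq (hx 0), rpow_neg_half_eq (hx 1), rpow_neg_half_eq (hy 0),
    rpow_neg_half_eq (hy 1)]
  field_simp
  ring

/-- Explicit formula for the scaling mean of a positive `2 × 2` matrix with respect
to the uniform stochastic vectors `(1/2, 1/2)`. -/
theorem scalingMean_two_by_two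
    (F : Fin 2 → Fin 2 → ℝ) (hF : ∀ r s, 0 < F r s) :
    scalingMean (fun _ => (1/2 : ℝ)) (fun _ => (1/2 : ℝ)) F
      = (Real.sqrt (F 0 0 * F 1 1) + Real.sqrt (F 0 1 * F 1 0)) / 2 := by
  have ha := hF 0 0
  have hb := hF 0 1
  have hc := hF 1 0
  have hd := hF 1 1
  set a := F 0 0 with hA
  set b := F 0 1 with hB
  set c := F 1 0 with hC
  set d := F 1 1 with hD
  set sa := Real.sqrt a with hSA
  set sb := Real.sqrt b with hSB
  set sc := Real.sqrt c with hSC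
  set sd := Real.sqrt d with hSD
  have hsa : 0 < sa := Real.sqrt_pos.mpr ha
  have hsb : 0 < sb := Real.sqrt_pos.mpr hb
  have hsc : 0 < sc := Real.sqrt_pos.mpr hc
  have hsd : 0 < sd := Real.sqrt_pos.mpr hd
  have ea : sa ^ 2 = a := Real.sq_sqrt ha.le
  have eb : sb ^ 2 = b := Real.sq_sqrt hb.le
  have ec : sc ^ 2 = c := Real.sq_sqrt hc.le
  have ed : sd ^ 2 = d := Real.sq_sqrt hd.le
  have hTad : Real.sqrt (a * d) = sa * sd := Real.sqrt_mul ha.le d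
  have hTbc : Real.sqrt (b * c) = sb * sc := Real.sqrt_mul hb.le c
  rw [hTad, hTbc]
  -- the witness point
  have hmem : (sa * sd + sb * sc) / 2 ∈
      { v : ℝ | ∃ (x : Fin 2 → ℝ) (y : Fin 2 → ℝ),
        (∀ r, 0 < x r) ∧ (∀ s, 0 < y s) ∧
        v = (∏ r, x r ^ (-((fun _ => (1/2:ℝ)) r))) * (∏ s, y s ^ (-((fun _ => (1/2:ℝ)) s))) *
            (∑ r, ∑ s, x r * F r s * y s * ((fun _ => (1/2:ℝ)) r) * ((fun _ => (1/2:ℝ)) s)) } := by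
    refine ⟨![sc * sd, sa * sb], ![sb * sd, sa * sc], ?_, ?_, ?_⟩
    · intro r; fin_cases r <;> simp <;> positivity
    · intro s; fin_cases s <;> simp <;> positivity
    · rw [expr_eq _ _ (by intro r; fin_cases r <;> simp <;> positivity)
        (by intro s; fin_cases s <;> simp <;> positivity)]
      simp only [Matrix.cons_val_zero, Matrix.cons_val_one, Matrix.head_cons, ← hA, ← hB, ← hC,
        ← hD]
      have hx0 : Real.sqrt (sc * sd) = Real.sqrt sc * Real.sqrt sd := Real.sqrt_mul hsc.le _
      have hx1 : Real.sqrt (sa * sb) = Real.sqrt sa * Real.sqrt sb := Real.sqrt_mul hsa.le _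
      have hy0 : Real.sqrt (sb * sd) = Real.sqrt sb * Real.sqrt sd := Real.sqrt_mul hsb.le _
      have hy1 : Real.sqrt (sa * sc) = Real.sqrt sa * Real.sqrt sc := Real.sqrt_mul hsa.le _
      rw [hx0, hx1, hy0, hy1]
      have fa : Real.sqrt sa ^ 2 = sa := Real.sq_sqrt hsa.le
      have fb : Real.sqrt sb ^ 2 = sb := Real.sq_sqrt hsb.le
      have fc : Real.sqrt sc ^ 2 = sc := Real.sq_sqrt hsc.le
      have fd : Real.sqrt sd ^ 2 = sd := Real.sq_sqrt hsd.le
      have hP : Real.sqrt sc * Real.sqrt sd * (Real.sqrt sa * Real.sqrt sb) *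
          (Real.sqrt sb * Real.sqrt sd * (Real.sqrt sa * Real.sqrt sc)) = sa * sb * sc * sd := by
        linear_combination (Real.sqrt sb ^ 2 * Real.sqrt sc ^ 2 * Real.sqrt sd ^ 2) * fa +
          (sa * Real.sqrt sc ^ 2 * Real.sqrt sd ^ 2) * fb + (sa * sb * Real.sqrt sd ^ 2) * fc +
          (sa * sb * sc) * fd
      rw [hP]
      have hS : sc * sd * a * (sb * sd) + sc * sd * b * (sa * sc) + sa * sb * c * (sb * sd) +
          sa * sb * d * (sa * sc) = 2 * (sa * sd + sb * sc) * (sa * sb * sc * sd) := by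
        linear_combination (-(sb * sc * sd ^ 2)) * ea + (-(sa * sc ^ 2 * sd)) * eb +
          (-(sa * sb ^ 2 * sd)) * ec + (-(sa ^ 2 * sb * sc)) * ed
      rw [hS]
      field_simp
      ring
  -- lower bound
  have hlb : ∀ v ∈ { v : ℝ | ∃ (x : Fin 2 → ℝ) (y : Fin 2 → ℝ),
        (∀ r, 0 < x r) ∧ (∀ s, 0 < y s) ∧
        v = (∏ r, x r ^ (-((fun _ => (1/2:ℝ)) r))) * (∏ s, y s ^ (-((fun _ => (1/2:ℝ)) s))) *
            (∑ r, ∑ s, x r * F r s * y s * ((fun _ => (1/2:ℝ)) r) * ((fun _ => (1/2:ℝ)) s)) },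
      (sa * sd + sb * sc) / 2 ≤ v := by
    rintro v ⟨x, y, hx, hy, rfl⟩
    rw [expr_eq _ _ hx hy]
    simp only [← hA, ← hB, ← hC, ← hD]
    set X0 := Real.sqrt (x 0) with hX0
    set X1 := Real.sqrt (x 1) with hX1
    set Y0 := Real.sqrt (y 0) with hY0
    set Y1 := Real.sqrt (y 1) with hY1
    have hX0p : 0 < X0 := Real.sqrt_pos.mpr (hx 0)
    have hX1p : 0 < X1 := Real.sqrt_pos.mpr (hx 1)
    have hY0p : 0 < Y0 := Real.sqrt_pos.mpr (hy 0)
    have hY1p : 0 < Y1 := Real.sqrt_pos.mpr (hy 1)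
    have gx0 : x 0 = X0 ^ 2 := (Real.sq_sqrt (hx 0).le).symm
    have gx1 : x 1 = X1 ^ 2 := (Real.sq_sqrt (hx 1).le).symm
    have gy0 : y 0 = Y0 ^ 2 := (Real.sq_sqrt (hy 0).le).symm
    have gy1 : y 1 = Y1 ^ 2 := (Real.sq_sqrt (hy 1).le).symm
    rw [gx0, gx1, gy0, gy1, ← ea, ← eb, ← ec, ← ed]
    rw [div_le_div_iff₀ (by norm_num) (by norm_num)]
    have key : (sa * sd + sb * sc) * (X0 * X1 * (Y0 * Y1)) * 2 ≤
        X0 ^ 2 * sa ^ 2 * Y0 ^ 2 + X0 ^ 2 * sb ^ 2 * Y1 ^ 2 + X1 ^ 2 * sc ^ 2 * Y0 ^ 2 +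
          X1 ^ 2 * sd ^ 2 * Y1 ^ 2 := by
      nlinarith [sq_nonneg (X0 * Y0 * sa - X1 * Y1 * sd), sq_nonneg (X0 * Y1 * sb - X1 * Y0 * sc)]
    have hPpos : 0 < X0 * X1 * (Y0 * Y1) := by positivity
    calc (sa * sd + sb * sc) * 4
        = ((sa * sd + sb * sc) * (X0 * X1 * (Y0 * Y1)) * 2) * (2 * (X0 * X1 * (Y0 * Y1))⁻¹) := by
          field_simp; ring
      _ ≤ (X0 ^ 2 * sa ^ 2 * Y0 ^ 2 + X0 ^ 2 * sb ^ 2 * Y1 ^ 2 + X1 ^ 2 * sc ^ 2 * Y0 ^ 2 +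
            X1 ^ 2 * sd ^ 2 * Y1 ^ 2) * (2 * (X0 * X1 * (Y0 * Y1))⁻¹) :=
          mul_le_mul_of_nonneg_right key (by positivity)
      _ = (X0 * X1 * (Y0 * Y1))⁻¹ *
            (X0 ^ 2 * sa ^ 2 * Y0 ^ 2 + X0 ^ 2 * sb ^ 2 * Y1 ^ 2 + X1 ^ 2 * sc ^ 2 * Y0 ^ 2 +
              X1 ^ 2 * sd ^ 2 * Y1 ^ 2) * 2 := by ring
  unfold scalingMean
  exact le_antisymm (csInf_le ⟨_, fun v hv => hlb v hv⟩ hmem) (le_csInf ⟨_, hmem⟩ hlb)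
end

section
/- Let F be an α×2 matrix with entries f_{r1}, f_{r2} ∈ (0,1), p = (p_1,...,p_α) and q = (q_1, q_2) stochastic vectors with positive entries, and let χ > 0 be the unique positive solution of Σ_{r=1}^α p_r f_{r1}/(f_{r1} + f_{r2} χ) = q_1. Then sm_{p,q}(F) = q_1^{q_1} (q_2/χ)^{q_2} ∏_{r=1}^α (f_{r1} + f_{r2} χ)^{p_r}. -/
/-!
Weighted AM–GM, with weights `w r s` having row sums `p r` and column sums `q s`, bounds the
scaling objective from below by a constant; when `F r s * p r * q s = a r * b s * w r s` the
bound is `∏ a r ^ p r * ∏ b s ^ q s`, and it is attained at `x = a⁻¹`, `y = b⁻¹`. For an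
`α × 2` matrix take `w r s = p r * f r s * m s / (f r 0 + f r 1 * χ)` with `m = (1, χ)`: the
defining equation of `χ` says that the first column sum is `q 0`, hence the second is `q 1`.
-/

open Finset

lemma Real.rpow_neg_mul_mul_rpow {c d : ℝ} (hc : 0 < c) (hd : 0 ≤ d) (e : ℝ) :
    c ^ (-e) * (c * d) ^ e = d ^ e := by
  rw [Real.mul_rpow hc.le hd, ← mul_assoc, ← Real.rpow_add hc, neg_add_cancel, Real.rpow_zero,
    one_mul]

lemma Real.prod_mul_rpow_eq_prod_rpow_sum {ι κ : Type*} [Fintype ι] [Fintype κ]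
    {u : ι → ℝ} {v : κ → ℝ} (hu : ∀ i, 0 < u i) (hv : ∀ k, 0 < v k) (w : ι → κ → ℝ) :
    ∏ ik : ι × κ, (u ik.1 * v ik.2) ^ w ik.1 ik.2
      = (∏ i, u i ^ ∑ k, w i k) * ∏ k, v k ^ ∑ i, w i k := by
  simp_rw [Real.mul_rpow (hu _).le (hv _).le, prod_mul_distrib,
    Real.rpow_sum_of_pos (hu _), Real.rpow_sum_of_pos (hv _)]
  rw [Fintype.prod_prod_type, Fintype.prod_prod_type_right]

namespace ScalingMean

variable {α β : ℕ} {p : Fin α → ℝ} {q : Fin β → ℝ} {F : Fin α → Fin β → ℝ}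

noncomputable def objective (p : Fin α → ℝ) (q : Fin β → ℝ) (F : Fin α → Fin β → ℝ)
    (x : Fin α → ℝ) (y : Fin β → ℝ) : ℝ :=
  (∏ r, x r ^ (-(p r))) * (∏ s, y s ^ (-(q s))) *
    (∑ r, ∑ s, x r * F r s * y s * p r * q s)

section Coupling

variable {w : Fin α → Fin β → ℝ} {a : Fin α → ℝ} {b : Fin β → ℝ}

lemma prod_rpow_le_objective (hw : ∀ r s, 0 ≤ w r s) (hrow : ∀ r, ∑ s, w r s = p r)
    (hcol : ∀ s, ∑ r, w r s = q s) (hp1 : ∑ r, p r = 1) (ha : ∀ r, 0 < a r) (hb : ∀ s, 0 < b s)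
    (hF : ∀ r s, F r s * p r * q s = a r * b s * w r s) {x : Fin α → ℝ} {y : Fin β → ℝ}
    (hx : ∀ r, 0 < x r) (hy : ∀ s, 0 < y s) :
    (∏ r, a r ^ p r) * ∏ s, b s ^ q s ≤ objective p q F x y := by
  have hxa : ∀ r, 0 < x r * a r := fun r => mul_pos (hx r) (ha r)
  have hyb : ∀ s, 0 < y s * b s := fun s => mul_pos (hy s) (hb s)
  have hsum : ∑ r, ∑ s, x r * F r s * y s * p r * q s
      = ∑ rs : Fin α × Fin β, w rs.1 rs.2 * (x rs.1 * a rs.1 * (y rs.2 * b rs.2)) := by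
    rw [Fintype.sum_prod_type]
    refine sum_congr rfl fun r _ => sum_congr rfl fun s _ => ?_
    linear_combination x r * y s * hF r s
  have amgm := Real.geom_mean_le_arith_mean_weighted univ
    (fun rs : Fin α × Fin β => w rs.1 rs.2)
    (fun rs : Fin α × Fin β => x rs.1 * a rs.1 * (y rs.2 * b rs.2)) (fun rs _ => hw rs.1 rs.2)
    (by rw [Fintype.sum_prod_type]; simp_rw [hrow]; exact hp1)
    (fun rs _ => (mul_pos (hxa rs.1) (hyb rs.2)).le)
  rw [Real.prod_mul_rpow_eq_prod_rpow_sum hxa hyb] at amgm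
  simp only [hrow, hcol] at amgm
  calc (∏ r, a r ^ p r) * ∏ s, b s ^ q s
      = (∏ r, x r ^ (-(p r))) * (∏ s, y s ^ (-(q s)))
          * ((∏ r, (x r * a r) ^ p r) * ∏ s, (y s * b s) ^ q s) := by
        rw [mul_mul_mul_comm, ← prod_mul_distrib, ← prod_mul_distrib]
        simp_rw [Real.rpow_neg_mul_mul_rpow (hx _) (ha _).le,
          Real.rpow_neg_mul_mul_rpow (hy _) (hb _).le]
    _ ≤ objective p q F x y := by
        rw [objective, hsum]
        gcongr
        exact mul_nonneg (prod_nonneg fun r _ => (Real.rpow_pos_of_pos (hx r) _).le)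
          (prod_nonneg fun s _ => (Real.rpow_pos_of_pos (hy s) _).le)

lemma objective_inv_eq (hrow : ∀ r, ∑ s, w r s = p r) (hp1 : ∑ r, p r = 1)
    (ha : ∀ r, 0 < a r) (hb : ∀ s, 0 < b s)
    (hF : ∀ r s, F r s * p r * q s = a r * b s * w r s) :
    objective p q F (fun r => (a r)⁻¹) (fun s => (b s)⁻¹)
      = (∏ r, a r ^ p r) * ∏ s, b s ^ q s := by
  have hterm : ∀ r s, (a r)⁻¹ * F r s * (b s)⁻¹ * p r * q s = w r s := fun r s => by
    have := (ha r).ne'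
    have := (hb s).ne'
    field_simp
    linear_combination hF r s
  have hsum : ∑ r, ∑ s, (a r)⁻¹ * F r s * (b s)⁻¹ * p r * q s = 1 := by
    simp_rw [hterm, hrow, hp1]
  simp only [objective, hsum, mul_one, Real.rpow_neg (inv_nonneg.2 (ha _).le),
    Real.rpow_neg (inv_nonneg.2 (hb _).le), Real.inv_rpow (ha _).le, Real.inv_rpow (hb _).le,
    inv_inv]

theorem eq_of_coupling (hw : ∀ r s, 0 ≤ w r s) (hrow : ∀ r, ∑ s, w r s = p r)
    (hcol : ∀ s, ∑ r, w r s = q s) (hp1 : ∑ r, p r = 1) (ha : ∀ r, 0 < a r) (hb : ∀ s, 0 < b s)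
    (hF : ∀ r s, F r s * p r * q s = a r * b s * w r s) :
    scalingMean p q F = (∏ r, a r ^ p r) * ∏ s, b s ^ q s := by
  refine IsLeast.csInf_eq ⟨⟨_, _, fun r => inv_pos.2 (ha r), fun s => inv_pos.2 (hb s),
    (objective_inv_eq hrow hp1 ha hb hF).symm⟩, ?_⟩
  rintro v ⟨x, y, hx, hy, rfl⟩
  exact prod_rpow_le_objective hw hrow hcol hp1 ha hb hF hx hy

end Coupling

/-- The infimum is attained at `x r = (∑ s, F r s * m s)⁻¹`, `y s = m s / q s`. -/
theorem eq_of_column_sums (m : Fin β → ℝ) (hF : ∀ r s, 0 ≤ F r s) (hp : ∀ r, 0 ≤ p r)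
    (hp1 : ∑ r, p r = 1) (hq : ∀ s, 0 < q s) (hm : ∀ s, 0 < m s)
    (hg : ∀ r, 0 < ∑ s, F r s * m s)
    (hcol : ∀ s, ∑ r, p r * F r s * m s / ∑ s', F r s' * m s' = q s) :
    scalingMean p q F = (∏ r, (∑ s, F r s * m s) ^ p r) * ∏ s, (q s / m s) ^ q s := by
  refine eq_of_coupling (w := fun r s => p r * F r s * m s / ∑ s', F r s' * m s')
    (fun r s => div_nonneg (mul_nonneg (mul_nonneg (hp r) (hF r s)) (hm s).le) (hg r).le)
    (fun r => ?_) hcol hp1 hg (fun s => div_pos (hq s) (hm s)) (fun r s => ?_)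
  · simp_rw [mul_assoc, ← sum_div, ← mul_sum]
    exact mul_div_cancel_right₀ _ (hg r).ne'
  · have := (hg r).ne'
    have := (hm s).ne'
    field_simp

end ScalingMean

theorem scalingMean_alpha_by_two_general {α : ℕ}
    (f : Fin α → Fin 2 → ℝ) (hf0 : ∀ r s, 0 < f r s)
    (p : Fin α → ℝ) (hp : ∀ r, 0 < p r) (hp1 : ∑ r, p r = 1)
    (q : Fin 2 → ℝ) (hq : ∀ s, 0 < q s) (hq1 : ∑ s, q s = 1)
    (χ : ℝ) (hχ : 0 < χ)
    (hχeq : ∑ r, p r * f r 0 / (f r 0 + f r 1 * χ) = q 0) :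
    scalingMean p q f
      = q 0 ^ (q 0) * (q 1 / χ) ^ (q 1) * ∏ r, (f r 0 + f r 1 * χ) ^ (p r) := by
  have hg : ∀ r, ∑ s, f r s * ![1, χ] s = f r 0 + f r 1 * χ := by simp [Fin.sum_univ_two]
  have hgpos : ∀ r, 0 < f r 0 + f r 1 * χ := fun r => add_pos (hf0 r 0) (mul_pos (hf0 r 1) hχ)
  have hcol1 : ∑ r, p r * f r 1 * χ / (f r 0 + f r 1 * χ) = q 1 := by
    have hsplit : ∀ r, p r * f r 1 * χ / (f r 0 + f r 1 * χ)
        = p r - p r * f r 0 / (f r 0 + f r 1 * χ) := fun r => by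
      field_simp [(hgpos r).ne']
      ring
    rw [Fin.sum_univ_two] at hq1
    rw [sum_congr rfl fun r _ => hsplit r, sum_sub_distrib, hp1, hχeq]
    linarith
  rw [ScalingMean.eq_of_column_sums ![1, χ] (fun r s => (hf0 r s).le) (fun r => (hp r).le)
    hp1 hq (fun s => by fin_cases s <;> simp [hχ]) (fun r => hg r ▸ hgpos r) ?_]
  · simp only [hg, Fin.prod_univ_two, Matrix.cons_val_zero, Matrix.cons_val_one, div_one]
    ring
  · intro s
    fin_cases s
    · simpa [hg] using hχeq
    · simpa [hg] using hcol1

/-- Halász–Székely formula for the scaling mean of an `α × 2` matrix. -/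
theorem scalingMean_alpha_by_two {α : ℕ}
    (f : Fin α → Fin 2 → ℝ) (hf0 : ∀ r s, 0 < f r s) (hf1 : ∀ r s, f r s < 1)
    (p : Fin α → ℝ) (hp : ∀ r, 0 < p r) (hp1 : ∑ r, p r = 1)
    (q : Fin 2 → ℝ) (hq : ∀ s, 0 < q s) (hq1 : ∑ s, q s = 1)
    (χ : ℝ) (hχ : 0 < χ)
    (hχeq : ∑ r, p r * f r 0 / (f r 0 + f r 1 * χ) = q 0) :
    scalingMean p q f
      = q 0 ^ (q 0) * (q 1 / χ) ^ (q 1) * ∏ r, (f r 0 + f r 1 * χ) ^ (p r) :=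
  scalingMean_alpha_by_two_general f hf0 p hp hp1 q hq hq1 χ hχ hχeq
end

section
/- Let F = (f_{ij}) be an α×β matrix with strictly positive entries, and let p, q be stochastic vectors with positive entries. Define maps I_1(x)_i = 1/x_i on ℝ_+^α, I_2(y)_j = 1/y_j on ℝ_+^β, K_2(x)_j = Σ_i f_{ij} x_i p_i, K_1(y)_i = Σ_j f_{ij} y_j q_j, and T = K_1 ∘ I_2 ∘ K_2 ∘ I_1 : ℝ_+^α → ℝ_+^α. Then for all x, z ∈ ℝ_+^α, d(T(x), T(z)) ≤ (tanh(δ/4))² d(x, z), where δ = 2 log(max_{ij} f_{ij} / min_{ij} f_{ij}) and d is the Hilbert pseudo-metric d(x,z) = log((max_i x_i/z_i)/(min_i x_i/z_i)). -/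
/-!
`T` alternates coordinatewise inversions, which are isometries of the Hilbert pseudo-metric,
with positive linear maps. A positive linear map whose matrix satisfies `A i j ≤ s * A i k`
contracts the metric by `(s - 1) / (s + 1)`, and for `s = max f / min f` this is `tanh (δ / 4)`.

For the contraction, put `t i = x i / z i ∈ [λ, e^d λ]` with `d = hilbertDist x z`. Each ratio
`(A x) j / (A z) j` is a weighted average of `t`, and the quotient of two such averages is largest
at a vertex of the box, where `t` takes only the values `λ` and `e^d λ`. There an explicit
sum-of-squares identity bounds the quotient by `((s v + 1) / (v + s))²` with `v = e^(d/2)`, and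
`log ((s e^u + 1) / (e^u + s)) ≤ (s - 1) / (s + 1) * u` because the derivative of the left side
is at most `(s - 1) / (s + 1)`.
-/

/-- The Hilbert pseudo-metric on the positive cone `ℝ₊^α`:
`d(x,z) = log(max_i x_i/z_i) − log(min_i x_i/z_i)`. -/
noncomputable def hilbertDist {α : ℕ} (x z : Fin α → ℝ) : ℝ :=
  Real.log (⨆ i, x i / z i) - Real.log (⨅ i, x i / z i)

open Real Finset

lemma two_value_ratio_bound {s v a b c d : ℝ} (hs : 1 ≤ s) (hv : 1 ≤ v)
    (ha : 0 ≤ a) (hb : 0 ≤ b) (hc : 0 ≤ c) (hd : 0 ≤ d) (had : a * d ≤ s ^ 2 * (b * c)) :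
    (v ^ 2 * a + c) * (b + d) * (v + s) ^ 2 ≤ (s * v + 1) ^ 2 * ((v ^ 2 * b + d) * (a + c)) := by
  obtain ⟨e, he, rfl⟩ : ∃ e, 0 ≤ e ∧ e ^ 2 = a := ⟨√a, sqrt_nonneg a, sq_sqrt ha⟩
  obtain ⟨f, hf, rfl⟩ : ∃ f, 0 ≤ f ∧ f ^ 2 = b := ⟨√b, sqrt_nonneg b, sq_sqrt hb⟩
  obtain ⟨g, hg, rfl⟩ : ∃ g, 0 ≤ g ∧ g ^ 2 = c := ⟨√c, sqrt_nonneg c, sq_sqrt hc⟩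
  obtain ⟨h, hh, rfl⟩ : ∃ h, 0 ≤ h ∧ h ^ 2 = d := ⟨√d, sqrt_nonneg d, sq_sqrt hd⟩
  have hs0 : 0 ≤ s := by linarith
  have heh : e * h ≤ s * (f * g) :=
    (pow_le_pow_iff_left₀ (by positivity) (by positivity) two_ne_zero).1
      (by linear_combination had)
  -- this expression is exactly the right side minus the left side
  have key : 0 ≤ (v ^ 2 - 1) * ((s ^ 2 - 1) * (v * e * f - g * h) ^ 2 +
      (s * (f * g) - e * h) *
        ((v ^ 2 + 2 * s * v + 1) * (e * h) + (s * v ^ 2 + 2 * v + s) * (f * g))) :=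
    mul_nonneg (by nlinarith) (add_nonneg (mul_nonneg (by nlinarith) (sq_nonneg _))
      (mul_nonneg (sub_nonneg.2 heh) (by positivity)))
  linear_combination key

lemma sum_mul_ratio_le {ι : Type*} [Fintype ι] {f g t : ι → ℝ} {s v lam : ℝ}
    (hs : 1 ≤ s) (hv : 1 ≤ v) (hlam : 0 ≤ lam) (hf : ∀ i, 0 ≤ f i) (hg : ∀ i, 0 ≤ g i)
    (hfg : ∀ i, f i ≤ s * g i) (hgf : ∀ i, g i ≤ s * f i)
    (ht : ∀ i, t i ∈ Set.Icc lam (v ^ 2 * lam)) :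
    (∑ i, f i * t i) * (∑ i, g i) * (v + s) ^ 2 ≤
      (s * v + 1) ^ 2 * ((∑ i, g i * t i) * (∑ i, f i)) := by
  set F := ∑ i, f i
  set G := ∑ i, g i
  set c : ι → ℝ := fun i => f i * G * (v + s) ^ 2 - (s * v + 1) ^ 2 * (g i * F)
  have hc : ∀ (u : ι → ℝ) (S : Finset ι), ∑ i ∈ S, u i * c i =
      (∑ i ∈ S, f i * u i) * G * (v + s) ^ 2 - (s * v + 1) ^ 2 * ((∑ i ∈ S, g i * u i) * F) := by
    intro u S
    simp only [c, mul_sub, sum_sub_distrib, sum_mul, mul_sum]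
    congr 1 <;> exact sum_congr rfl fun i _ => by ring
  -- a linear functional on the box `∏ [lam, v² lam]` is maximal at a vertex
  set S := univ.filter fun i => 0 ≤ c i
  set S' := univ.filter fun i => ¬ 0 ≤ c i
  have hvertex : ∑ i, t i * c i ≤ ∑ i ∈ S, v ^ 2 * lam * c i + ∑ i ∈ S', lam * c i := by
    rw [← sum_filter_add_sum_filter_not univ fun i => 0 ≤ c i]
    refine add_le_add (sum_le_sum fun i hi => ?_) (sum_le_sum fun i hi => ?_)
    · exact mul_le_mul_of_nonneg_right (ht i).2 (mem_filter.1 hi).2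
    · exact mul_le_mul_of_nonpos_right (ht i).1 (not_le.1 (mem_filter.1 hi).2).le
  have hF : F = ∑ i ∈ S, f i + ∑ i ∈ S', f i := (sum_filter_add_sum_filter_not univ _ f).symm
  have hG : G = ∑ i ∈ S, g i + ∑ i ∈ S', g i := (sum_filter_add_sum_filter_not univ _ g).symm
  have hfS : ∑ i ∈ S, f i ≤ s * ∑ i ∈ S, g i := mul_sum S g s ▸ sum_le_sum fun i _ => hfg i
  have hgS : ∑ i ∈ S', g i ≤ s * ∑ i ∈ S', f i := mul_sum S' f s ▸ sum_le_sum fun i _ => hgf i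
  have hcross : (∑ i ∈ S, f i) * ∑ i ∈ S', g i ≤ s ^ 2 * ((∑ i ∈ S, g i) * ∑ i ∈ S', f i) := by
    have := mul_le_mul hfS hgS (sum_nonneg fun i _ => hg i)
      (mul_nonneg (by linarith) (sum_nonneg fun i _ => hg i))
    linarith
  have hblock := two_value_ratio_bound hs hv (sum_nonneg fun i _ => hf i)
    (sum_nonneg fun i _ => hg i) (sum_nonneg fun i _ => hf i) (sum_nonneg fun i _ => hg i) hcross
  have hS := hc (fun _ => v ^ 2 * lam) S
  have hS' := hc (fun _ => lam) S'
  simp only [← sum_mul] at hS hS'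
  have htot := hc t univ
  rw [hF, hG] at hS hS' htot ⊢
  linear_combination hvertex + hS + hS' - htot + lam * hblock

lemma log_mul_exp_add_one_div_le {s u : ℝ} (hs : 1 ≤ s) (hu : 0 ≤ u) :
    log ((s * exp u + 1) / (exp u + s)) ≤ (s - 1) / (s + 1) * u := by
  set φ : ℝ → ℝ := fun u => log (s * exp u + 1) - log (exp u + s)
  have hφ : ∀ u, HasDerivAt φ (s * exp u / (s * exp u + 1) - exp u / (exp u + s)) u := fun u =>
    (((hasDerivAt_exp u).const_mul s).add_const 1).log (by positivity) |>.sub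
      (((hasDerivAt_exp u).add_const s).log (by positivity))
  have hφ' : ∀ u, deriv φ u ≤ (s - 1) / (s + 1) := fun u => by
    have he := exp_pos u
    rw [(hφ u).deriv, div_sub_div _ _ (by positivity) (by positivity),
      div_le_div_iff₀ (by positivity) (by positivity)]
    nlinarith [mul_nonneg (mul_nonneg (sub_nonneg.2 hs) (by linarith : (0:ℝ) ≤ s))
      (sq_nonneg (exp u - 1))]
  have := image_sub_le_mul_sub_of_deriv_le (fun u => (hφ u).differentiableAt) hφ' hu
  have hφ0 : φ 0 = 0 := by simp [φ, add_comm]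
  rw [log_div (by positivity) (by positivity)]
  simpa only [hφ0, sub_zero] using this

lemma tanh_half_log {s : ℝ} (hs : 0 < s) : tanh (log s / 2) = (s - 1) / (s + 1) := by
  have hw : exp (log s / 2) ^ 2 = s := by
    rw [← exp_nat_mul]; push_cast; rw [mul_div_cancel₀ _ two_ne_zero, exp_log hs]
  rw [tanh_eq, exp_neg]
  conv_rhs => rw [← hw]
  field_simp

lemma ciInf_pos_of_forall_pos {ι : Type*} [Finite ι] [Nonempty ι] {f : ι → ℝ}
    (hf : ∀ i, 0 < f i) : 0 < ⨅ i, f i := by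
  obtain ⟨i, hi⟩ := exists_eq_ciInf_of_finite (f := f)
  exact hi ▸ hf i

lemma le_iSup_div_iInf_mul {ι : Type*} [Finite ι] [Nonempty ι] {f : ι → ℝ}
    (hf : ∀ i, 0 < f i) (i j : ι) : f i ≤ (⨆ k, f k) / (⨅ k, f k) * f j := by
  have hinf := ciInf_pos_of_forall_pos hf
  calc f i ≤ ⨆ k, f k := le_ciSup (Set.finite_range f).bddAbove i
    _ = (⨆ k, f k) / (⨅ k, f k) * ⨅ k, f k := (div_mul_cancel₀ _ hinf.ne').symm
    _ ≤ (⨆ k, f k) / (⨅ k, f k) * f j := by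
      gcongr
      · exact div_nonneg ((hf i).le.trans (le_ciSup (Set.finite_range f).bddAbove i)) hinf.le
      · exact ciInf_le (Set.finite_range f).bddBelow j

section hilbertDist

variable {n : ℕ} [NeZero n] {x z : Fin n → ℝ}

lemma hilbertDist_nonneg (hx : ∀ i, 0 < x i) (hz : ∀ i, 0 < z i) : 0 ≤ hilbertDist x z :=
  sub_nonneg.2 <| log_le_log (ciInf_pos_of_forall_pos fun i => div_pos (hx i) (hz i)) <|
    ciInf_le_ciSup (Set.finite_range _).bddBelow (Set.finite_range _).bddAbove

lemma div_le_exp_hilbertDist_mul_iInf (hx : ∀ i, 0 < x i) (hz : ∀ i, 0 < z i) (i : Fin n) :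
    x i / z i ≤ exp (hilbertDist x z) * ⨅ k, x k / z k := by
  have hinf := ciInf_pos_of_forall_pos fun i => div_pos (hx i) (hz i)
  have hsup : 0 < ⨆ k, x k / z k := hinf.trans_le <|
    ciInf_le_ciSup (Set.finite_range _).bddBelow (Set.finite_range _).bddAbove
  rw [hilbertDist, exp_sub, exp_log hsup, exp_log hinf, div_mul_cancel₀ _ hinf.ne']
  exact le_ciSup (Set.finite_range fun k => x k / z k).bddAbove i

lemma hilbertDist_le_log {C : ℝ} (hx : ∀ i, 0 < x i) (hz : ∀ i, 0 < z i) (hC : 0 < C)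
    (h : ∀ i k, x i / z i ≤ C * (x k / z k)) : hilbertDist x z ≤ log C := by
  have hinf := ciInf_pos_of_forall_pos fun i => div_pos (hx i) (hz i)
  have hsup : 0 < ⨆ k, x k / z k := hinf.trans_le <|
    ciInf_le_ciSup (Set.finite_range _).bddBelow (Set.finite_range _).bddAbove
  rw [hilbertDist, ← log_div hsup.ne' hinf.ne']
  refine log_le_log (div_pos hsup hinf) ((div_le_iff₀ hinf).2 (ciSup_le fun i => ?_))
  exact (div_le_iff₀' hC).1 (le_ciInf fun k => (div_le_iff₀' hC).2 (h i k))

lemma hilbertDist_one_div_le (hx : ∀ i, 0 < x i) (hz : ∀ i, 0 < z i) :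
    hilbertDist (fun i => 1 / x i) (fun i => 1 / z i) ≤ hilbertDist x z := by
  refine (hilbertDist_le_log (fun i => one_div_pos.2 (hx i)) (fun i => one_div_pos.2 (hz i))
    (exp_pos _) fun i k => ?_).trans_eq (log_exp _)
  have hki := (div_le_exp_hilbertDist_mul_iInf hx hz k).trans <|
    mul_le_mul_of_nonneg_left (ciInf_le (Set.finite_range _).bddBelow i) (exp_pos _).le
  have hinv : ∀ j, 1 / x j / (1 / z j) = (x j / z j)⁻¹ := fun j => by
    simp only [one_div, inv_div_inv, inv_div]
  rw [hinv, hinv, ← div_eq_mul_inv, le_div_iff₀ (div_pos (hx k) (hz k)),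
    inv_mul_le_iff₀ (div_pos (hx i) (hz i)), mul_comm]
  exact hki

lemma hilbertDist_one_div (hx : ∀ i, 0 < x i) (hz : ∀ i, 0 < z i) :
    hilbertDist (fun i => 1 / x i) (fun i => 1 / z i) = hilbertDist x z := by
  refine le_antisymm (hilbertDist_one_div_le hx hz) ?_
  simpa using
    hilbertDist_one_div_le (fun i => one_div_pos.2 (hx i)) (fun i => one_div_pos.2 (hz i))

end hilbertDist

theorem hilbertDist_sum_mul_le {m n : ℕ} [NeZero m] [NeZero n] {A : Fin m → Fin n → ℝ} {s : ℝ}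
    (hA : ∀ i j, 0 < A i j) (hs : 1 ≤ s) (hAs : ∀ i j k, A i j ≤ s * A i k)
    {x z : Fin m → ℝ} (hx : ∀ i, 0 < x i) (hz : ∀ i, 0 < z i) :
    hilbertDist (fun j => ∑ i, A i j * x i) (fun j => ∑ i, A i j * z i) ≤
      (s - 1) / (s + 1) * hilbertDist x z := by
  set D := hilbertDist x z
  set v := exp (D / 2)
  have hD : 0 ≤ D := hilbertDist_nonneg hx hz
  have hv : 1 ≤ v := one_le_exp (by positivity)
  have hv2 : v ^ 2 = exp D := by rw [← exp_nat_mul]; push_cast; ring_nf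
  have hY : ∀ j, 0 < ∑ i, A i j * x i := fun j =>
    sum_pos (fun i _ => mul_pos (hA i j) (hx i)) univ_nonempty
  have hZ : ∀ j, 0 < ∑ i, A i j * z i := fun j =>
    sum_pos (fun i _ => mul_pos (hA i j) (hz i)) univ_nonempty
  have hAzx : ∀ j, ∑ i, A i j * z i * (x i / z i) = ∑ i, A i j * x i := fun j =>
    sum_congr rfl fun i _ => by field_simp [(hz i).ne']
  have hratio : ∀ j k, (∑ i, A i j * x i) / (∑ i, A i j * z i) ≤
      ((s * v + 1) / (v + s)) ^ 2 * ((∑ i, A i k * x i) / (∑ i, A i k * z i)) := by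
    intro j k
    have key := sum_mul_ratio_le (f := fun i => A i j * z i) (g := fun i => A i k * z i)
      (t := fun i => x i / z i) hs hv
      (ciInf_pos_of_forall_pos fun i => div_pos (hx i) (hz i)).le
      (fun i => (mul_pos (hA i j) (hz i)).le) (fun i => (mul_pos (hA i k) (hz i)).le)
      (fun i => (mul_le_mul_of_nonneg_right (hAs i j k) (hz i).le).trans_eq (mul_assoc ..))
      (fun i => (mul_le_mul_of_nonneg_right (hAs i k j) (hz i).le).trans_eq (mul_assoc ..))
      (fun i => ⟨ciInf_le (Set.finite_range _).bddBelow i,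
        hv2 ▸ div_le_exp_hilbertDist_mul_iInf hx hz i⟩)
    rw [hAzx, hAzx] at key
    rw [div_pow, div_mul_div_comm, div_le_div_iff₀ (hZ j) (mul_pos (by positivity) (hZ k))]
    linear_combination key
  calc hilbertDist (fun j => ∑ i, A i j * x i) (fun j => ∑ i, A i j * z i)
      ≤ log (((s * v + 1) / (v + s)) ^ 2) := hilbertDist_le_log hY hZ (by positivity) hratio
    _ = 2 * log ((s * exp (D / 2) + 1) / (exp (D / 2) + s)) := by rw [log_pow]; push_cast; rfl
    _ ≤ 2 * ((s - 1) / (s + 1) * (D / 2)) := by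
      gcongr; exact log_mul_exp_add_one_div_le hs (by positivity)
    _ = (s - 1) / (s + 1) * D := by ring

theorem hilbertDist_sum_mul_one_div_le {m n : ℕ} [NeZero m] [NeZero n] {A : Fin m → Fin n → ℝ}
    {s : ℝ} (hA : ∀ i j, 0 < A i j) (hs : 1 ≤ s) (hAs : ∀ i j k, A i j ≤ s * A i k)
    {x z : Fin m → ℝ} (hx : ∀ i, 0 < x i) (hz : ∀ i, 0 < z i) :
    hilbertDist (fun j => ∑ i, A i j * (1 / x i)) (fun j => ∑ i, A i j * (1 / z i)) ≤
      (s - 1) / (s + 1) * hilbertDist x z := by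
  rw [← hilbertDist_one_div hx hz]
  exact hilbertDist_sum_mul_le hA hs hAs (fun i => one_div_pos.2 (hx i))
    fun i => one_div_pos.2 (hz i)

theorem birkhoff_contraction_general {α β : ℕ} [NeZero α] [NeZero β]
    (F : Fin α → Fin β → ℝ) (hF : ∀ i j, 0 < F i j)
    (p : Fin α → ℝ) (hp : ∀ i, 0 < p i)
    (q : Fin β → ℝ) (hq : ∀ j, 0 < q j)
    (I₁ : (Fin α → ℝ) → (Fin α → ℝ)) (hI₁ : ∀ x i, I₁ x i = 1 / x i)
    (K₂ : (Fin α → ℝ) → (Fin β → ℝ)) (hK₂ : ∀ x j, K₂ x j = ∑ i, F i j * x i * p i)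
    (I₂ : (Fin β → ℝ) → (Fin β → ℝ)) (hI₂ : ∀ y j, I₂ y j = 1 / y j)
    (K₁ : (Fin β → ℝ) → (Fin α → ℝ)) (hK₁ : ∀ y i, K₁ y i = ∑ j, F i j * y j * q j)
    (T : (Fin α → ℝ) → (Fin α → ℝ)) (hT : T = K₁ ∘ I₂ ∘ K₂ ∘ I₁)
    (δ : ℝ)
    (hδ : δ = 2 * Real.log ((⨆ ij : Fin α × Fin β, F ij.1 ij.2) /
                            (⨅ ij : Fin α × Fin β, F ij.1 ij.2))) :
    ∀ x z : Fin α → ℝ, (∀ i, 0 < x i) → (∀ i, 0 < z i) →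
      hilbertDist (T x) (T z) ≤ (Real.tanh (δ / 4)) ^ 2 * hilbertDist x z := by
  intro x z hx hz
  set f : Fin α × Fin β → ℝ := fun ij => F ij.1 ij.2
  set s := (⨆ ij, f ij) / ⨅ ij, f ij
  have hFs : ∀ i j i' j', F i j ≤ s * F i' j' := fun i j i' j' =>
    le_iSup_div_iInf_mul (fun ij => hF ij.1 ij.2) (i, j) (i', j')
  have hs : 1 ≤ s := le_of_mul_le_mul_right (by simpa using hFs 0 0 0 0) (hF 0 0)
  have hθ : tanh (δ / 4) = (s - 1) / (s + 1) := by
    rw [hδ, show 2 * log s / 4 = log s / 2 by ring]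
    exact tanh_half_log (by positivity)
  set Y : (Fin α → ℝ) → Fin β → ℝ := fun y j => ∑ i, F i j * p i * (1 / y i)
  have hTY : ∀ y, T y = fun i => ∑ j, F i j * q j * (1 / Y y j) := fun y => by
    funext i
    simp only [hT, Function.comp_apply, hK₁, hI₂, hK₂, hI₁, Y, mul_right_comm _ (q _),
      mul_right_comm _ (p _)]
  have hY : ∀ y, (∀ i, 0 < y i) → ∀ j, 0 < Y y j := fun y hy j =>
    sum_pos (fun i _ => by have := hF i j; have := hp i; have := hy i; positivity) univ_nonempty
  calc hilbertDist (T x) (T z) ≤ (s - 1) / (s + 1) * hilbertDist (Y x) (Y z) := by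
        rw [hTY, hTY]
        refine hilbertDist_sum_mul_one_div_le (fun j i => mul_pos (hF i j) (hq j)) hs
          (fun j i k => ?_) (hY x hx) (hY z hz)
        simpa [mul_assoc] using mul_le_mul_of_nonneg_right (hFs i j k j) (hq j).le
    _ ≤ (s - 1) / (s + 1) * ((s - 1) / (s + 1) * hilbertDist x z) := by
        gcongr
        refine hilbertDist_sum_mul_one_div_le (fun i j => mul_pos (hF i j) (hp i)) hs
          (fun i j k => ?_) hx hz
        simpa [mul_assoc] using mul_le_mul_of_nonneg_right (hFs i j i k) (hp i).le
    _ = tanh (δ / 4) ^ 2 * hilbertDist x z := by rw [hθ]; ring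

/-- The Birkhoff contraction estimate: `T = K₁ ∘ I₂ ∘ K₂ ∘ I₁` contracts the Hilbert
pseudo-metric by at least the factor `tanh(δ/4)²`, where
`δ = 2 log(max f_{ij} / min f_{ij})`. -/
theorem birkhoff_contraction {α β : ℕ} [NeZero α] [NeZero β]
    (F : Fin α → Fin β → ℝ) (hF : ∀ i j, 0 < F i j)
    (p : Fin α → ℝ) (hp : ∀ i, 0 < p i) (hp1 : ∑ i, p i = 1)
    (q : Fin β → ℝ) (hq : ∀ j, 0 < q j) (hq1 : ∑ j, q j = 1)
    (I₁ : (Fin α → ℝ) → (Fin α → ℝ)) (hI₁ : ∀ x i, I₁ x i = 1 / x i)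
    (K₂ : (Fin α → ℝ) → (Fin β → ℝ)) (hK₂ : ∀ x j, K₂ x j = ∑ i, F i j * x i * p i)
    (I₂ : (Fin β → ℝ) → (Fin β → ℝ)) (hI₂ : ∀ y j, I₂ y j = 1 / y j)
    (K₁ : (Fin β → ℝ) → (Fin α → ℝ)) (hK₁ : ∀ y i, K₁ y i = ∑ j, F i j * y j * q j)
    (T : (Fin α → ℝ) → (Fin α → ℝ)) (hT : T = K₁ ∘ I₂ ∘ K₂ ∘ I₁)
    (δ : ℝ)
    (hδ : δ = 2 * Real.log ((⨆ ij : Fin α × Fin β, F ij.1 ij.2) /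
                            (⨅ ij : Fin α × Fin β, F ij.1 ij.2))) :
    ∀ x z : Fin α → ℝ, (∀ i, 0 < x i) → (∀ i, 0 < z i) →
      hilbertDist (T x) (T z) ≤ (Real.tanh (δ / 4)) ^ 2 * hilbertDist x z :=
  birkhoff_contraction_general F hF p hp q hq I₁ hI₁ K₂ hK₂ I₂ hI₂ K₁ hK₁ T hT δ hδ
end

section
/- Let K : ℝ_+^β → ℝ_+^α be the linear map K(y)_i = Σ_j f_{ij} y_j with all f_{ij} > 0. Then K is a weak contraction for the Hilbert pseudo-metrics: d(K(y), K(y')) ≤ d(y, y') for all y, y' ∈ ℝ_+^β. -/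
/-- A linear map with strictly positive matrix is a weak contraction of the Hilbert
pseudo-metric. -/
theorem positive_linear_weak_contraction {α β : ℕ} [NeZero α] [NeZero β]
    (F : Fin α → Fin β → ℝ) (hF : ∀ i j, 0 < F i j)
    (K : (Fin β → ℝ) → (Fin α → ℝ)) (hK : ∀ y i, K y i = ∑ j, F i j * y j) :
    ∀ y y' : Fin β → ℝ, (∀ j, 0 < y j) → (∀ j, 0 < y' j) →
      hilbertDist (K y) (K y') ≤ hilbertDist y y' := by
  intro y y' hy hy'
  have hβ : Nonempty (Fin β) := Fin.pos_iff_nonempty.mp (Nat.pos_of_ne_zero (NeZero.ne β))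
  have hα : Nonempty (Fin α) := Fin.pos_iff_nonempty.mp (Nat.pos_of_ne_zero (NeZero.ne α))
  set M := ⨆ j, y j / y' j with hM
  set m := ⨅ j, y j / y' j with hm
  have hbA : BddAbove (Set.range fun j => y j / y' j) := (Set.finite_range _).bddAbove
  have hbB : BddBelow (Set.range fun j => y j / y' j) := (Set.finite_range _).bddBelow
  have hm_pos : 0 < m := by
    obtain ⟨j, hj⟩ := exists_eq_ciInf_of_finite (f := fun j => y j / y' j)
    rw [hm, ← hj]
    exact div_pos (hy j) (hy' j)
  have hmM : m ≤ M := by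
    refine le_trans (ciInf_le hbB (Classical.arbitrary _)) (le_ciSup hbA _)
  -- positivity of K y' i and K y i
  have hKy' : ∀ i, 0 < K y' i := fun i => by
    rw [hK]
    exact Finset.sum_pos (fun j _ => mul_pos (hF i j) (hy' j)) Finset.univ_nonempty
  have hKy : ∀ i, 0 < K y i := fun i => by
    rw [hK]
    exact Finset.sum_pos (fun j _ => mul_pos (hF i j) (hy j)) Finset.univ_nonempty
  -- ratio bounds
  have hub : ∀ i, K y i / K y' i ≤ M := by
    intro i
    rw [div_le_iff₀ (hKy' i), hK, hK, Finset.mul_sum]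
    refine Finset.sum_le_sum fun j _ => ?_
    have h1 : y j / y' j ≤ M := le_ciSup hbA j
    have h2 : y j ≤ M * y' j := (div_le_iff₀ (hy' j)).mp h1
    calc F i j * y j ≤ F i j * (M * y' j) := by
          exact mul_le_mul_of_nonneg_left h2 (hF i j).le
      _ = M * (F i j * y' j) := by ring
  have hlb : ∀ i, m ≤ K y i / K y' i := by
    intro i
    rw [le_div_iff₀ (hKy' i), hK, hK, Finset.mul_sum]
    refine Finset.sum_le_sum fun j _ => ?_
    have h1 : m ≤ y j / y' j := ciInf_le hbB j
    have h2 : m * y' j ≤ y j := (le_div_iff₀ (hy' j)).mp h1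
    calc m * (F i j * y' j) = F i j * (m * y' j) := by ring
      _ ≤ F i j * y j := mul_le_mul_of_nonneg_left h2 (hF i j).le
  have hbA' : BddAbove (Set.range fun i => K y i / K y' i) := (Set.finite_range _).bddAbove
  have hbB' : BddBelow (Set.range fun i => K y i / K y' i) := (Set.finite_range _).bddBelow
  have hsup : (⨆ i, K y i / K y' i) ≤ M := ciSup_le hub
  have hinf : m ≤ ⨅ i, K y i / K y' i := le_ciInf hlb
  have hsup_pos : 0 < ⨆ i, K y i / K y' i :=
    lt_of_lt_of_le (div_pos (hKy (Classical.arbitrary _)) (hKy' (Classical.arbitrary _)))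
      (le_ciSup hbA' _)
  unfold hilbertDist
  have h1 : Real.log (⨆ i, K y i / K y' i) ≤ Real.log M :=
    Real.log_le_log hsup_pos hsup
  have h2 : Real.log m ≤ Real.log (⨅ i, K y i / K y' i) :=
    Real.log_le_log hm_pos hinf
  linarith
end

section
/- Let F = (f_{ij}) be an α×β matrix with strictly positive entries, p, q stochastic vectors with positive entries, and T = K_1 ∘ I_2 ∘ K_2 ∘ I_1 : ℝ_+^α → ℝ_+^α as defined by I_1(x)_i = 1/x_i, K_2(x)_j = Σ_i f_{ij} x_i p_i, I_2(y)_j = 1/y_j, K_1(y)_i = Σ_j f_{ij} y_j q_j. Then T has a fixed point x_T ∈ ℝ_+^α, unique up to multiplication by a positive scalar. -/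
/-!
The fixed points of `T` are exactly the critical points of the potential
`Φ(x) = ∑ⱼ qⱼ log (K₂ I₁ x)ⱼ + ∑ᵢ pᵢ log xᵢ`, which is invariant under scaling because `p` and `q`
are stochastic. With `c = min F_kj p_k`, normalising by `min x = 1` gives `Φ(x) ≥ log c + pᵢ log xᵢ`
for every `i`, so a minimiser of `Φ` over a compact box `[1, r]` is a global minimiser on the open
cone, hence a fixed point.
For uniqueness, let `λ = maxᵢ zᵢ / xᵢ`, attained at `i₀`. Monotonicity and homogeneity of `T` give
`z = T z ≤ λ • T x = λ • x`, and equality at `i₀` of these sums with positive weights propagates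
back through `K₁` and `K₂` to equality in every coordinate.
-/

open Finset Filter Topology Real

theorem eq_of_forall_le_of_sum_mul_eq {ι : Type*} [Fintype ι] {w u v : ι → ℝ}
    (hw : ∀ i, 0 < w i) (huv : ∀ i, u i ≤ v i) (h : ∑ i, w i * u i = ∑ i, w i * v i) :
    u = v := by
  funext i
  have hle : ∀ i ∈ univ, w i * u i ≤ w i * v i := fun i _ =>
    mul_le_mul_of_nonneg_left (huv i) (hw i).le
  exact mul_left_cancel₀ (hw i).ne' ((sum_eq_sum_iff_of_le hle).1 h i (mem_univ i))

theorem sum_mul_comp_update {ι : Type*} [Fintype ι] [DecidableEq ι] (w : ι → ℝ) (f : ℝ → ℝ)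
    (x : ι → ℝ) (i : ι) (t : ℝ) :
    ∑ k, w k * f (Function.update x i t k) = ∑ k, w k * f (x k) + w i * (f t - f (x i)) := by
  rw [← sub_eq_iff_eq_add', ← sum_sub_distrib, sum_eq_single i]
  · simp only [Function.update_self]; ring
  · intro k _ hk
    simp only [Function.update_of_ne hk, sub_self]
  · simp

section Sinkhorn

variable {ι κ : Type*} [Fintype ι]

-- `sinkhornDual F p = K₂ ∘ I₁` and `sinkhornMap F p q = T`.
noncomputable def sinkhornDual (F : ι → κ → ℝ) (p x : ι → ℝ) : κ → ℝ :=
  fun j => ∑ i, F i j * p i * (x i)⁻¹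

noncomputable def sinkhornMap [Fintype κ] (F : ι → κ → ℝ) (p : ι → ℝ) (q : κ → ℝ)
    (x : ι → ℝ) : ι → ℝ :=
  fun i => ∑ j, F i j * q j * (sinkhornDual F p x j)⁻¹

noncomputable def sinkhornPotential [Fintype κ] (F : ι → κ → ℝ) (p : ι → ℝ) (q : κ → ℝ)
    (x : ι → ℝ) : ℝ :=
  ∑ j, q j * log (sinkhornDual F p x j) + ∑ i, p i * log (x i)

variable {F : ι → κ → ℝ} {p : ι → ℝ} {q : κ → ℝ}

theorem sinkhornDual_pos [Nonempty ι] (hF : ∀ i j, 0 < F i j) (hp : ∀ i, 0 < p i)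
    {x : ι → ℝ} (hx : ∀ i, 0 < x i) (j : κ) : 0 < sinkhornDual F p x j :=
  sum_pos (fun i _ => mul_pos (mul_pos (hF i j) (hp i)) (inv_pos.2 (hx i))) univ_nonempty

theorem sinkhornDual_smul (c : ℝ) (x : ι → ℝ) :
    sinkhornDual F p (c • x) = c⁻¹ • sinkhornDual F p x := by
  funext j
  simp only [sinkhornDual, Pi.smul_apply, smul_eq_mul, mul_sum, mul_inv]
  exact sum_congr rfl fun i _ => by ring

theorem sinkhornMap_smul [Fintype κ] (c : ℝ) (x : ι → ℝ) :
    sinkhornMap F p q (c • x) = c • sinkhornMap F p q x := by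
  funext i
  simp only [sinkhornMap, sinkhornDual_smul, Pi.smul_apply, smul_eq_mul, mul_sum, mul_inv,
    inv_inv]
  exact sum_congr rfl fun j _ => by ring

theorem sinkhornDual_anti (hF : ∀ i j, 0 < F i j) (hp : ∀ i, 0 < p i)
    {x y : ι → ℝ} (hx : ∀ i, 0 < x i) (hxy : x ≤ y) :
    sinkhornDual F p y ≤ sinkhornDual F p x :=
  fun j => sum_le_sum fun i _ =>
    mul_le_mul_of_nonneg_left (inv_anti₀ (hx i) (hxy i)) (mul_pos (hF i j) (hp i)).le

theorem sinkhornMap_fixedPoint_unique [Fintype κ] [Nonempty ι] [Nonempty κ]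
    (hF : ∀ i j, 0 < F i j) (hp : ∀ i, 0 < p i) (hq : ∀ j, 0 < q j) {x z : ι → ℝ}
    (hx : ∀ i, 0 < x i) (hz : ∀ i, 0 < z i) (hfx : sinkhornMap F p q x = x) (hfz : sinkhornMap F p q z = z) :
    ∃ c : ℝ, 0 < c ∧ z = c • x := by
  obtain ⟨i₀, hi₀⟩ := Finite.exists_max fun i => z i / x i
  set c := z i₀ / x i₀
  have hc : 0 < c := div_pos (hz i₀) (hx i₀)
  refine ⟨c, hc, ?_⟩
  have hcx : ∀ i, 0 < (c • x) i := fun i => mul_pos hc (hx i)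
  have hzc : z ≤ c • x := fun i => (div_le_iff₀ (hx i)).1 (hi₀ i)
  have hdual : ∀ j, (sinkhornDual F p z j)⁻¹ ≤ (sinkhornDual F p (c • x) j)⁻¹ := fun j =>
    inv_anti₀ (sinkhornDual_pos hF hp hcx j) (sinkhornDual_anti hF hp hz hzc j)
  have hrow : sinkhornMap F p q z i₀ = sinkhornMap F p q (c • x) i₀ := by
    rw [sinkhornMap_smul, hfz, hfx, Pi.smul_apply, smul_eq_mul, div_mul_cancel₀ _ (hx i₀).ne']
  have hdual_eq : sinkhornDual F p z = sinkhornDual F p (c • x) := funext fun j =>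
    inv_injective <| congrFun (eq_of_forall_le_of_sum_mul_eq
      (fun j => mul_pos (hF i₀ j) (hq j)) hdual hrow) j
  obtain ⟨j⟩ := ‹Nonempty κ›
  have hinv := eq_of_forall_le_of_sum_mul_eq (w := fun i => F i j * p i)
    (u := fun i => ((c • x) i)⁻¹) (v := fun i => (z i)⁻¹)
    (fun i => mul_pos (hF i j) (hp i)) (fun i => inv_anti₀ (hz i) (hzc i))
    (congrFun hdual_eq j).symm
  exact funext fun i => inv_injective (congrFun hinv i).symm

theorem sinkhornPotential_smul [Fintype κ] [Nonempty ι] (hF : ∀ i j, 0 < F i j)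
    (hp : ∀ i, 0 < p i) (hp1 : ∑ i, p i = 1) (hq1 : ∑ j, q j = 1) {x : ι → ℝ}
    (hx : ∀ i, 0 < x i) {c : ℝ} (hc : 0 < c) :
    sinkhornPotential F p q (c • x) = sinkhornPotential F p q x := by
  have hdual : ∀ j, log (sinkhornDual F p (c • x) j) = -log c + log (sinkhornDual F p x j) := by
    intro j
    rw [sinkhornDual_smul, Pi.smul_apply, smul_eq_mul,
      log_mul (inv_ne_zero hc.ne') (sinkhornDual_pos hF hp hx j).ne', log_inv]
  have hcoord : ∀ i, log ((c • x) i) = log c + log (x i) := fun i =>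
    log_mul hc.ne' (hx i).ne'
  simp only [sinkhornPotential, hdual, hcoord, mul_add, sum_add_distrib, ← sum_mul, hp1, hq1,
    one_mul]
  ring

theorem continuousOn_sinkhornPotential [Fintype κ] [Nonempty ι] (hF : ∀ i j, 0 < F i j)
    (hp : ∀ i, 0 < p i) : ContinuousOn (sinkhornPotential F p q) {x | ∀ i, 0 < x i} := by
  have hcoord : ∀ i, ContinuousOn (fun x : ι → ℝ => x i) {x | ∀ i, 0 < x i} := fun i =>
    (continuous_apply i).continuousOn
  have hdual : ∀ j, ContinuousOn (fun x => sinkhornDual F p x j) {x | ∀ i, 0 < x i} := fun j =>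
    continuousOn_finsetSum _ fun i _ =>
      continuousOn_const.mul ((hcoord i).inv₀ fun x hx => (hx i).ne')
  exact (continuousOn_finsetSum _ fun j _ => continuousOn_const.mul
      ((hdual j).log fun x hx => (sinkhornDual_pos hF hp hx j).ne')).add
    (continuousOn_finsetSum _ fun i _ => continuousOn_const.mul
      ((hcoord i).log fun x hx => (hx i).ne'))

theorem log_add_mul_log_le_sinkhornPotential [Fintype κ] (hF : ∀ i j, 0 < F i j)
    (hp : ∀ i, 0 < p i) (hq : ∀ j, 0 < q j) (hq1 : ∑ j, q j = 1) {c : ℝ} (hc : 0 < c)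
    (hcF : ∀ k j, c ≤ F k j * p k) {x : ι → ℝ} (hx : ∀ i, 1 ≤ x i) {k : ι} (hk : x k = 1)
    (i : ι) : log c + p i * log (x i) ≤ sinkhornPotential F p q x := by
  have hdual : ∀ j, c ≤ sinkhornDual F p x j := fun j => calc
    c ≤ F k j * p k * (x k)⁻¹ := by rw [hk, inv_one, mul_one]; exact hcF k j
    _ ≤ sinkhornDual F p x j := single_le_sum (f := fun i => F i j * p i * (x i)⁻¹)
        (fun i _ => (mul_pos (mul_pos (hF i j) (hp i)) (inv_pos.2 (one_pos.trans_le (hx i)))).le)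
        (mem_univ k)
  have hlog_dual : log c ≤ ∑ j, q j * log (sinkhornDual F p x j) := calc
    log c = ∑ j, q j * log c := by rw [← sum_mul, hq1, one_mul]
    _ ≤ _ := sum_le_sum fun j _ => mul_le_mul_of_nonneg_left (log_le_log hc (hdual j)) (hq j).le
  have hlog_coord : p i * log (x i) ≤ ∑ i, p i * log (x i) :=
    single_le_sum (f := fun i => p i * log (x i))
      (fun i _ => mul_nonneg (hp i).le (log_nonneg (hx i))) (mem_univ i)
  rw [sinkhornPotential]
  linarith

theorem exists_isMinOn_sinkhornPotential [Fintype κ] [Nonempty ι] [Nonempty κ]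
    (hF : ∀ i j, 0 < F i j) (hp : ∀ i, 0 < p i) (hp1 : ∑ i, p i = 1) (hq : ∀ j, 0 < q j)
    (hq1 : ∑ j, q j = 1) :
    ∃ x, x ∈ {x : ι → ℝ | ∀ i, 0 < x i} ∧
      IsMinOn (sinkhornPotential F p q) {x | ∀ i, 0 < x i} x := by
  obtain ⟨c, hc, hcF⟩ : ∃ c, 0 < c ∧ ∀ k j, c ≤ F k j * p k := by
    obtain ⟨⟨k₀, j₀⟩, hmin⟩ := Finite.exists_min fun kj : ι × κ => F kj.1 kj.2 * p kj.1
    exact ⟨_, mul_pos (hF k₀ j₀) (hp k₀), fun k j => hmin (k, j)⟩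
  have hbound : ∀ x : ι → ℝ, (∀ i, 1 ≤ x i) → ∀ k, x k = 1 → ∀ i,
      log c + p i * log (x i) ≤ sinkhornPotential F p q x := fun _ hx _ hk =>
    log_add_mul_log_le_sinkhornPotential hF hp hq hq1 hc hcF hx hk
  set Φ₁ := sinkhornPotential F p q 1
  obtain ⟨k₀⟩ := ‹Nonempty ι›
  have hΦ₁ : log c ≤ Φ₁ := by simpa using hbound 1 (fun _ => le_rfl) k₀ rfl k₀
  set r : ι → ℝ := fun i => exp ((Φ₁ - log c) / p i)
  have h1r : (1 : ι → ℝ) ∈ Set.Icc 1 r :=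
    ⟨le_rfl, fun i => one_le_exp (div_nonneg (sub_nonneg.2 hΦ₁) (hp i).le)⟩
  obtain ⟨xs, hxs, hxs_min⟩ := isCompact_Icc.exists_isMinOn ⟨1, h1r⟩
    ((continuousOn_sinkhornPotential hF hp).mono fun x hx i => one_pos.trans_le (hx.1 i))
  refine ⟨xs, fun i => one_pos.trans_le (hxs.1 i), fun z hz => ?_⟩
  obtain ⟨k, hk⟩ := Finite.exists_min z
  set w := (z k)⁻¹ • z
  have hw1 : ∀ i, 1 ≤ w i := fun i => (le_inv_mul_iff₀ (hz k)).2 (by simpa using hk i)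
  have hwk : w k = 1 := inv_mul_cancel₀ (hz k).ne'
  show sinkhornPotential F p q xs ≤ sinkhornPotential F p q z
  rw [← sinkhornPotential_smul hF hp hp1 hq1 hz (inv_pos.2 (hz k))]
  by_cases hwr : w ≤ r
  · exact hxs_min ⟨hw1, hwr⟩
  · obtain ⟨i, hi⟩ : ∃ i, r i < w i := by simpa [Pi.le_def] using hwr
    have hlarge : Φ₁ - log c < p i * log (w i) := by
      rw [← div_lt_iff₀' (hp i)]
      exact (lt_log_iff_exp_lt (one_pos.trans_le (hw1 i))).2 hi
    linarith [hbound w hw1 k hwk i, isMinOn_iff.1 hxs_min 1 h1r]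

theorem sinkhornMap_eq_of_isLocalMin [Fintype κ] [Nonempty ι] (hF : ∀ i j, 0 < F i j)
    (hp : ∀ i, 0 < p i) {x : ι → ℝ} (hx : ∀ i, 0 < x i)
    (hmin : IsLocalMin (sinkhornPotential F p q) x) : sinkhornMap F p q x = x := by
  classical
  funext i
  set S := sinkhornDual F p x
  have hS : ∀ j, 0 < S j := sinkhornDual_pos hF hp hx
  have hdual : ∀ t j, sinkhornDual F p (Function.update x i t) j =
      S j + F i j * p i * (t⁻¹ - (x i)⁻¹) := fun t j =>
    sum_mul_comp_update (fun k => F k j * p k) Inv.inv x i t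
  have hline : (fun t => sinkhornPotential F p q (Function.update x i t)) = fun t =>
      ∑ j, q j * log (S j + F i j * p i * (t⁻¹ - (x i)⁻¹)) +
        (∑ k, p k * log (x k) + p i * (log t - log (x i))) := by
    funext t
    simp only [sinkhornPotential, hdual, sum_mul_comp_update _ log]
  have hloc : IsLocalMin (fun t => sinkhornPotential F p q (Function.update x i t)) (x i) := by
    have : IsLocalMin (sinkhornPotential F p q) (Function.update x i (x i)) := by
      rwa [Function.update_eq_self]
    exact this.comp_continuous (continuous_const.update i continuous_id).continuousAt
  have hderiv : HasDerivAt (fun t => sinkhornPotential F p q (Function.update x i t))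
      (∑ j, q j * (F i j * p i * -((x i) ^ 2)⁻¹ / S j) + p i * (x i)⁻¹) (x i) := by
    have hxi := (hx i).ne'
    have hsum := HasDerivAt.fun_sum (u := univ) fun j _ =>
      ((((hasDerivAt_inv hxi).sub_const (x i)⁻¹).const_mul (F i j * p i)).const_add (S j)).log
        (by simpa using (hS j).ne') |>.const_mul (q j)
    rw [hline]
    refine (hsum.add ((((hasDerivAt_log hxi).sub_const (log (x i))).const_mul (p i)).const_add
      (∑ k, p k * log (x k)))).congr_deriv ?_
    simp only [sub_self, mul_zero, add_zero]
  have hrow : ∑ j, q j * (F i j * p i * -((x i) ^ 2)⁻¹ / S j) =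
      -(p i / x i ^ 2) * sinkhornMap F p q x i := by
    rw [sinkhornMap, mul_sum]
    exact sum_congr rfl fun j _ => by ring
  have hzero := hloc.hasDerivAt_eq_zero hderiv
  -- `∂Φ/∂xᵢ = (pᵢ / xᵢ²) (xᵢ - (T x)ᵢ)`
  have hfactor : p i / x i ^ 2 * (x i - sinkhornMap F p q x i) = 0 := by
    rw [← hzero, hrow]
    field_simp
    ring
  have hpx : p i / x i ^ 2 ≠ 0 := (div_pos (hp i) (pow_pos (hx i) 2)).ne'
  exact (sub_eq_zero.1 ((mul_eq_zero.1 hfactor).resolve_left hpx)).symm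

theorem exists_pos_sinkhornMap_eq [Fintype κ] [Nonempty ι] [Nonempty κ]
    (hF : ∀ i j, 0 < F i j) (hp : ∀ i, 0 < p i) (hp1 : ∑ i, p i = 1) (hq : ∀ j, 0 < q j)
    (hq1 : ∑ j, q j = 1) : ∃ x : ι → ℝ, (∀ i, 0 < x i) ∧ sinkhornMap F p q x = x := by
  obtain ⟨x, hx, hmin⟩ := exists_isMinOn_sinkhornPotential hF hp hp1 hq hq1
  have hpos_nhds : ∀ᶠ z in 𝓝 x, ∀ i, 0 < z i :=
    eventually_all.2 fun i => (continuous_apply i).continuousAt.eventually (lt_mem_nhds (hx i))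
  exact ⟨x, hx, sinkhornMap_eq_of_isLocalMin hF hp hx (hmin.isLocalMin hpos_nhds)⟩

end Sinkhorn

/-- The map `T = K₁ ∘ I₂ ∘ K₂ ∘ I₁` has a fixed point in the positive cone,
unique up to multiplication by a positive scalar. -/
theorem T_fixed_point_unique_up_to_scaling {α β : ℕ} [NeZero α] [NeZero β]
    (F : Fin α → Fin β → ℝ) (hF : ∀ i j, 0 < F i j)
    (p : Fin α → ℝ) (hp : ∀ i, 0 < p i) (hp1 : ∑ i, p i = 1)
    (q : Fin β → ℝ) (hq : ∀ j, 0 < q j) (hq1 : ∑ j, q j = 1)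
    (I₁ : (Fin α → ℝ) → (Fin α → ℝ)) (hI₁ : ∀ x i, I₁ x i = 1 / x i)
    (K₂ : (Fin α → ℝ) → (Fin β → ℝ)) (hK₂ : ∀ x j, K₂ x j = ∑ i, F i j * x i * p i)
    (I₂ : (Fin β → ℝ) → (Fin β → ℝ)) (hI₂ : ∀ y j, I₂ y j = 1 / y j)
    (K₁ : (Fin β → ℝ) → (Fin α → ℝ)) (hK₁ : ∀ y i, K₁ y i = ∑ j, F i j * y j * q j)
    (T : (Fin α → ℝ) → (Fin α → ℝ)) (hT : T = K₁ ∘ I₂ ∘ K₂ ∘ I₁) :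
    ∃ x : Fin α → ℝ, (∀ i, 0 < x i) ∧ T x = x ∧
      ∀ z : Fin α → ℝ, (∀ i, 0 < z i) → T z = z →
        ∃ c : ℝ, 0 < c ∧ z = fun i => c * x i := by
  have hT' : T = sinkhornMap F p q := by
    funext x i
    simp only [hT, Function.comp_apply, hK₁, hI₂, hK₂, hI₁, sinkhornMap, sinkhornDual, one_div,
      mul_right_comm _ (p _), mul_right_comm _ (q _)]
  subst hT'
  obtain ⟨x, hx, hfix⟩ := exists_pos_sinkhornMap_eq hF hp hp1 hq hq1
  exact ⟨x, hx, hfix, fun z hz hzfix => sinkhornMap_fixedPoint_unique hF hp hq hx hz hfix hzfix⟩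
end
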